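/- Let A ∈ ℝ^{n×d}, let k be a positive integer, let η ≥ 0, and let V ∈ ℝ^{d×m} have orthonormal columns such that ‖A(I − VVᵀ)‖₂² ≤ (η/k)·‖A − A_k‖_F². Then ‖A − A_k V Vᵀ‖_F² ≤ (1+η)·‖A − A_k‖_F². In particular, A_kVVᵀ is a matrix of rank at most k whose row space is contained in the column space of V (hence in row(SA) when V comes from an SVD of SA), achieving low-rank approximation error at most (1+η)‖A − A_k‖_F². -/

import Mathlib

/-!
Split `A - A_k V Vᵀ = (A - A_k) + A_k (I - V Vᵀ)`. Since `A_k (I + t C)` has rank at most `k` for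
every `C` and `t`, optimality of `A_k` forces `A - A_k` to be Frobenius-orthogonal to every `A_k C`;
hence the squared error is `‖A - A_k‖_F² + ‖A_k (I - V Vᵀ)‖_F²`. Taking `C = u uᵀ` gives
`‖A_k u‖ ≤ ‖A u‖`, so `A_k (I - V Vᵀ)` inherits the spectral bound `(η/k) ‖A - A_k‖_F²` of
`A (I - V Vᵀ)`, and having rank at most `k`, its squared Frobenius norm (the sum of at most `k`
nonzero eigenvalues of its Gram matrix) is at most `η ‖A - A_k‖_F²`.
-/

open Matrix

/-- Squared Frobenius norm of a real matrix. -/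
noncomputable def frobSq {m n : Type*} [Fintype m] [Fintype n] (M : Matrix m n ℝ) : ℝ :=
  ∑ i, ∑ j, (M i j) ^ 2

/-- Row space of a real matrix: the span of its rows. -/
def rowSpace {m n : Type*} (M : Matrix m n ℝ) : Submodule ℝ (n → ℝ) :=
  Submodule.span ℝ (Set.range fun i => M i)

/-- Column space of a real matrix: the span of its columns. -/
def colSpace {m n : Type*} (M : Matrix m n ℝ) : Submodule ℝ (m → ℝ) :=
  Submodule.span ℝ (Set.range fun j => Mᵀ j)

/-- Squared Euclidean norm of a vector in `ℝ^d`. -/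
noncomputable def sqNorm {d : ℕ} (x : Fin d → ℝ) : ℝ := ∑ l, (x l) ^ 2

def frobInner {m n : Type*} [Fintype m] [Fintype n] (X Y : Matrix m n ℝ) : ℝ :=
  ∑ i, ∑ j, X i j * Y i j

def IsBestRankApprox {m n : Type*} [Fintype m] [Fintype n] (k : ℕ) (A Ak : Matrix m n ℝ) : Prop :=
  Ak.rank ≤ k ∧ ∀ X : Matrix m n ℝ, X.rank ≤ k → frobSq (A - Ak) ≤ frobSq (A - X)

section FrobeniusAlgebra

variable {m n : Type*} [Fintype m] [Fintype n]

lemma frobSq_nonneg (M : Matrix m n ℝ) : 0 ≤ frobSq M :=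
  Finset.sum_nonneg fun _ _ => Finset.sum_nonneg fun _ _ => sq_nonneg _

lemma frobSq_add_smul (X Y : Matrix m n ℝ) (t : ℝ) :
    frobSq (X + t • Y) = frobSq X + 2 * t * frobInner X Y + t ^ 2 * frobSq Y := by
  simp only [frobSq, frobInner, Matrix.add_apply, Matrix.smul_apply, smul_eq_mul, Finset.mul_sum,
    ← Finset.sum_add_distrib]
  exact Finset.sum_congr rfl fun _ _ => Finset.sum_congr rfl fun _ _ => by ring

lemma frobSq_add (X Y : Matrix m n ℝ) :
    frobSq (X + Y) = frobSq X + 2 * frobInner X Y + frobSq Y := by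
  simpa using frobSq_add_smul X Y 1

lemma frobSq_eq_trace (M : Matrix m n ℝ) : frobSq M = (Mᵀ * M).trace := by
  simp only [frobSq, trace, diag, mul_apply, transpose_apply, sq]
  exact Finset.sum_comm

lemma frobInner_mul_vecMulVec {l : Type*} [Fintype l] (X : Matrix m n ℝ) (Y : Matrix m l ℝ)
    (u : n → ℝ) (w : l → ℝ) :
    frobInner X (Y * vecMulVec w u) = (X *ᵥ u) ⬝ᵥ (Y *ᵥ w) := by
  simp only [frobInner, dotProduct, mulVec, mul_apply, vecMulVec_apply, Finset.mul_sum,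
    Finset.sum_mul]
  refine Finset.sum_congr rfl fun _ _ => ?_
  rw [Finset.sum_comm]
  exact Finset.sum_congr rfl fun _ _ => Finset.sum_congr rfl fun _ _ => by ring

end FrobeniusAlgebra

lemma sqNorm_nonneg {d : ℕ} (x : Fin d → ℝ) : 0 ≤ sqNorm x :=
  Finset.sum_nonneg fun _ _ => sq_nonneg _

lemma sqNorm_eq_dotProduct {d : ℕ} (x : Fin d → ℝ) : sqNorm x = x ⬝ᵥ x := by
  simp only [sqNorm, dotProduct, sq]

lemma sqNorm_add {d : ℕ} (x y : Fin d → ℝ) :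
    sqNorm (x + y) = sqNorm x + 2 * (x ⬝ᵥ y) + sqNorm y := by
  simp only [sqNorm_eq_dotProduct, add_dotProduct, dotProduct_add, dotProduct_comm y x]
  ring

lemma eq_zero_of_forall_two_mul_le {c e : ℝ} (he : 0 ≤ e)
    (h : ∀ t : ℝ, 2 * t * c ≤ t ^ 2 * e) : c = 0 := by
  set s := c / (e + 1)
  have hc : c = s * (e + 1) := (div_mul_cancel₀ c (by positivity)).symm
  have key := h s
  rw [hc] at key ⊢
  have hs : s ^ 2 * (e + 2) ≤ 0 := by nlinarith
  have : s = 0 := by nlinarith [sq_nonneg s]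
  simp [this]

namespace IsBestRankApprox

variable {m n : Type*} [Fintype m] [Fintype n] [DecidableEq n] {k : ℕ} {A Ak : Matrix m n ℝ}

lemma frobInner_sub_mul_eq_zero (h : IsBestRankApprox k A Ak) (C : Matrix n n ℝ) :
    frobInner (A - Ak) (Ak * C) = 0 := by
  refine eq_zero_of_forall_two_mul_le (frobSq_nonneg (Ak * C)) fun t => ?_
  have hrank : (Ak * (1 + t • C)).rank ≤ k := (rank_mul_le_left _ _).trans h.1
  have hopt := h.2 _ hrank
  rw [Matrix.mul_add, Matrix.mul_one, Matrix.mul_smul, ← sub_sub, sub_eq_add_neg (A - Ak),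
    ← neg_smul, frobSq_add_smul] at hopt
  linarith

lemma dotProduct_sub_mulVec_eq_zero (h : IsBestRankApprox k A Ak) (u : n → ℝ) :
    ((A - Ak) *ᵥ u) ⬝ᵥ (Ak *ᵥ u) = 0 := by
  rw [← frobInner_mul_vecMulVec, h.frobInner_sub_mul_eq_zero]

end IsBestRankApprox

lemma IsBestRankApprox.sqNorm_mulVec_le {k p d : ℕ} {A Ak : Matrix (Fin p) (Fin d) ℝ}
    (h : IsBestRankApprox k A Ak) (u : Fin d → ℝ) : sqNorm (Ak *ᵥ u) ≤ sqNorm (A *ᵥ u) := by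
  have hsplit : A *ᵥ u = (A - Ak) *ᵥ u + Ak *ᵥ u := by rw [← add_mulVec, sub_add_cancel]
  rw [hsplit, sqNorm_add, h.dotProduct_sub_mulVec_eq_zero]
  linarith [sqNorm_nonneg ((A - Ak) *ᵥ u)]

lemma Matrix.IsHermitian.trace_le_rank_mul {n : Type*} [Fintype n] [DecidableEq n]
    {S : Matrix n n ℝ} (hS : S.IsHermitian) {c : ℝ}
    (hle : ∀ i, hS.eigenvalues i ≤ c) : S.trace ≤ S.rank * c := by
  rw [hS.trace_eq_sum_eigenvalues, hS.rank_eq_card_non_zero_eigs, Fintype.card_subtype,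
    ← Finset.sum_filter_ne_zero]
  simpa using Finset.sum_le_card_nsmul _ _ c fun i _ => hle i

lemma frobSq_le_rank_mul {p d : ℕ} {M : Matrix (Fin p) (Fin d) ℝ} {c : ℝ}
    (hM : ∀ v, sqNorm (M *ᵥ v) ≤ c * sqNorm v) : frobSq M ≤ M.rank * c := by
  have hS : (Mᵀ * M).IsHermitian := isHermitian_conjTranspose_mul_self M
  have hle : ∀ i, hS.eigenvalues i ≤ c := by
    intro i
    set v : Fin d → ℝ := ⇑(hS.eigenvectorBasis i)
    have hv : sqNorm v = 1 := by
      have hunit : ‖hS.eigenvectorBasis i‖ ^ 2 = 1 := by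
        rw [hS.eigenvectorBasis.orthonormal.1 i, one_pow]
      rw [EuclideanSpace.norm_sq_eq] at hunit
      simpa [sqNorm, v] using hunit
    have heig : hS.eigenvalues i = sqNorm (M *ᵥ v) := by
      rw [hS.eigenvalues_eq, sqNorm_eq_dotProduct, ← mulVec_mulVec, dotProduct_mulVec,
        vecMul_transpose]
      simp [v]
    simpa [heig, hv] using hM v
  rw [frobSq_eq_trace, ← rank_transpose_mul_self M]
  exact hS.trace_le_rank_mul hle

lemma rowSpace_mul_le {l m n : Type*} [Fintype m] (B : Matrix l m ℝ) (W : Matrix m n ℝ) :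
    rowSpace (B * W) ≤ rowSpace W :=
  Submodule.span_le.2 <| Set.range_subset_iff.2 fun i => by
    rw [SetLike.mem_coe, mul_apply_eq_vecMul, vecMul_eq_sum]
    exact Submodule.sum_mem _ fun j _ => Submodule.smul_mem _ _ (Submodule.subset_span ⟨j, rfl⟩)

theorem stmt6_general {n d m : ℕ} (k : ℕ)
    (A Ak : Matrix (Fin n) (Fin d) ℝ)
    (hAkrank : Ak.rank ≤ k)
    (hAkbest : ∀ X : Matrix (Fin n) (Fin d) ℝ, X.rank ≤ k → frobSq (A - Ak) ≤ frobSq (A - X))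
    (η : ℝ) (hη : 0 ≤ η)
    (V : Matrix (Fin d) (Fin m) ℝ)
    -- `‖A (I - V Vᵀ)‖₂² ≤ (η/k) ‖A - A_k‖_F²`
    (hspec : ∀ v : Fin d → ℝ,
      sqNorm ((A * (1 - V * Vᵀ)).mulVec v) ≤ η / (k : ℝ) * frobSq (A - Ak) * sqNorm v) :
    frobSq (A - Ak * V * Vᵀ) ≤ (1 + η) * frobSq (A - Ak) ∧
    (Ak * V * Vᵀ).rank ≤ k ∧ rowSpace (Ak * V * Vᵀ) ≤ colSpace V := by
  have hbest : IsBestRankApprox k A Ak := ⟨hAkrank, hAkbest⟩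
  set M := Ak * (1 - V * Vᵀ) with hMdef
  have hsplit : A - Ak * V * Vᵀ = (A - Ak) + M := by
    rw [hMdef, Matrix.mul_sub, Matrix.mul_one, Matrix.mul_assoc]
    abel
  have hM : ∀ v, sqNorm (M *ᵥ v) ≤ η / k * frobSq (A - Ak) * sqNorm v := fun v =>
    calc sqNorm (M *ᵥ v) = sqNorm (Ak *ᵥ ((1 - V * Vᵀ) *ᵥ v)) := by rw [mulVec_mulVec]
      _ ≤ sqNorm (A *ᵥ ((1 - V * Vᵀ) *ᵥ v)) := hbest.sqNorm_mulVec_le _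
      _ ≤ η / k * frobSq (A - Ak) * sqNorm v := by rw [mulVec_mulVec]; exact hspec v
  have hkη : (k : ℝ) * (η / k) ≤ η := by
    rcases eq_or_ne (k : ℝ) 0 with hk | hk
    · simpa [hk] using hη
    · rw [mul_div_cancel₀ _ hk]
  have hF := frobSq_nonneg (A - Ak)
  have hMfrob : frobSq M ≤ η * frobSq (A - Ak) :=
    calc frobSq M ≤ M.rank * (η / k * frobSq (A - Ak)) := frobSq_le_rank_mul hM
      _ ≤ k * (η / k * frobSq (A - Ak)) := by
        gcongr
        exact_mod_cast (rank_mul_le_left _ _).trans hAkrank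
      _ ≤ η * frobSq (A - Ak) := by rw [← mul_assoc]; gcongr
  refine ⟨?_, (rank_mul_le_left _ _).trans ((rank_mul_le_left _ _).trans hAkrank),
    rowSpace_mul_le _ _⟩
  rw [hsplit, frobSq_add, hbest.frobInner_sub_mul_eq_zero]
  linarith

theorem stmt6 {n d m : ℕ} (k : ℕ) (hk : 0 < k)
    (A Ak : Matrix (Fin n) (Fin d) ℝ)
    (hAkrank : Ak.rank ≤ k)
    (hAkbest : ∀ X : Matrix (Fin n) (Fin d) ℝ, X.rank ≤ k → frobSq (A - Ak) ≤ frobSq (A - X))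
    (η : ℝ) (hη : 0 ≤ η)
    (V : Matrix (Fin d) (Fin m) ℝ) (hV : Vᵀ * V = 1)
    -- `‖A (I - V Vᵀ)‖₂² ≤ (η/k) ‖A - A_k‖_F²`
    (hspec : ∀ v : Fin d → ℝ,
      sqNorm ((A * (1 - V * Vᵀ)).mulVec v) ≤ η / (k : ℝ) * frobSq (A - Ak) * sqNorm v) :
    frobSq (A - Ak * V * Vᵀ) ≤ (1 + η) * frobSq (A - Ak) ∧
    (Ak * V * Vᵀ).rank ≤ k ∧ rowSpace (Ak * V * Vᵀ) ≤ colSpace V :=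
  stmt6_general k A Ak hAkrank hAkbest η hη V hspec
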